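/- arXiv:2510.21241 — 9 statements merged into one kernel-verified Lean document; each statement's English description precedes it below -/
import Mathlib

section
/- Assume W₁ is invertible. Then the preconditioner 𝒫 factors as 𝒫 = (L ⊗ M)·W₁, 𝒫 is invertible, and the preconditioned system matrix satisfies 𝒫⁻¹𝒜 = I_{sn} + W₁⁻¹W₂. -/
open Matrix Kronecker

/-!
Since `L ⊗ M` is invertible, it factors out of `𝒫`, leaving `W₁`, and out of `𝒜`, leaving
`W₁ + W₂` because `A⁻¹ ⊗ M = L ⊗ M + (L ⊗ M)(Û ⊗ I)`; hence `𝒫⁻¹𝒜 = W₁⁻¹(W₁ + W₂)`.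
-/

namespace Matrix

variable {R ι m n : Type*} [CommRing R] [Fintype ι] [DecidableEq ι]
  [Fintype m] [DecidableEq m] [Fintype n] [DecidableEq n]

theorem kronecker_add_smul_one_kronecker_eq_mul {L : Matrix m m R} {M : Matrix n n R}
    (hL : IsUnit L) (hM : IsUnit M) (K : Matrix n n R) (c : R) :
    L ⊗ₖ M + c • ((1 : Matrix m m R) ⊗ₖ K) = (L ⊗ₖ M) * (1 + c • (L⁻¹ ⊗ₖ (M⁻¹ * K))) := by
  rw [mul_add, mul_one, mul_smul_comm, ← mul_kronecker_mul,
    mul_nonsing_inv L ((isUnit_iff_isUnit_det L).mp hL),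
    mul_nonsing_inv_cancel_left M K ((isUnit_iff_isUnit_det M).mp hM)]

theorem mul_one_add_kronecker_add_smul_one_kronecker (L U : Matrix m m R) (M K : Matrix n n R)
    (c : R) :
    (L * (1 + U)) ⊗ₖ M + c • ((1 : Matrix m m R) ⊗ₖ K) =
      (L ⊗ₖ M + c • ((1 : Matrix m m R) ⊗ₖ K)) + (L ⊗ₖ M) * (U ⊗ₖ (1 : Matrix n n R)) := by
  rw [← mul_kronecker_mul, mul_one, mul_add, mul_one, add_kronecker]
  abel

theorem nonsing_inv_mul_mul_add {B W : Matrix ι ι R} (hB : IsUnit B) (hW : IsUnit W)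
    (V : Matrix ι ι R) : (B * W)⁻¹ * (B * (W + V)) = 1 + W⁻¹ * V := by
  rw [mul_inv_rev, mul_assoc, nonsing_inv_mul_cancel_left B _ ((isUnit_iff_isUnit_det B).mp hB),
    mul_add, nonsing_inv_mul W ((isUnit_iff_isUnit_det W).mp hW)]

end Matrix

theorem preconditioner_factorization_general
    (n s : ℕ)
    (M K : Matrix (Fin n) (Fin n) ℝ) (hM : IsUnit M) (τ : ℝ)
    (L Uhat A : Matrix (Fin s) (Fin s) ℝ)
    (hL : IsUnit L)
    (hAinv : A⁻¹ = L * (1 + Uhat))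
    (calA calP W₁ W₂ : Matrix (Fin s × Fin n) (Fin s × Fin n) ℝ)
    (hcalA : calA = A⁻¹ ⊗ₖ M + τ • ((1 : Matrix (Fin s) (Fin s) ℝ) ⊗ₖ K))
    (hcalP : calP = L ⊗ₖ M + τ • ((1 : Matrix (Fin s) (Fin s) ℝ) ⊗ₖ K))
    (hW₁ : W₁ = 1 + τ • (L⁻¹ ⊗ₖ (M⁻¹ * K)))
    (hW₂ : W₂ = Uhat ⊗ₖ (1 : Matrix (Fin n) (Fin n) ℝ))
    (hW₁unit : IsUnit W₁) :
    calP = (L ⊗ₖ M) * W₁ ∧ IsUnit calP ∧ calP⁻¹ * calA = 1 + W₁⁻¹ * W₂ := by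
  have hLM : IsUnit (L ⊗ₖ M) := hL.kronecker hM
  have hfactP : calP = (L ⊗ₖ M) * W₁ := by
    rw [hcalP, hW₁, kronecker_add_smul_one_kronecker_eq_mul hL hM]
  have hfactA : calA = (L ⊗ₖ M) * (W₁ + W₂) := by
    rw [hcalA, hAinv, mul_one_add_kronecker_add_smul_one_kronecker, ← hcalP, hfactP, hW₂, mul_add]
  refine ⟨hfactP, hfactP ▸ hLM.mul hW₁unit, ?_⟩
  rw [hfactP, hfactA, nonsing_inv_mul_mul_add hLM hW₁unit]

/-- Assume `W₁` is invertible. Then the preconditioner factors as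
`calP = (L ⊗ M) * W₁`, `calP` is invertible, and `calP⁻¹calA = I + W₁⁻¹W₂`. -/
theorem preconditioner_factorization
    (n s : ℕ) (hn : 0 < n) (hs : 0 < s)
    (M K : Matrix (Fin n) (Fin n) ℝ) (hM : IsUnit M) (τ : ℝ)
    (L Uhat A : Matrix (Fin s) (Fin s) ℝ)
    (hL : IsUnit L) (hA : IsUnit A)
    (hUhat : ∀ i j : Fin s, j ≤ i → Uhat i j = 0)
    (hAinv : A⁻¹ = L * (1 + Uhat))
    (calA calP W₁ W₂ : Matrix (Fin s × Fin n) (Fin s × Fin n) ℝ)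
    (hcalA : calA = A⁻¹ ⊗ₖ M + τ • ((1 : Matrix (Fin s) (Fin s) ℝ) ⊗ₖ K))
    (hcalP : calP = L ⊗ₖ M + τ • ((1 : Matrix (Fin s) (Fin s) ℝ) ⊗ₖ K))
    (hW₁ : W₁ = 1 + τ • (L⁻¹ ⊗ₖ (M⁻¹ * K)))
    (hW₂ : W₂ = Uhat ⊗ₖ (1 : Matrix (Fin n) (Fin n) ℝ))
    (hW₁unit : IsUnit W₁) :
    calP = (L ⊗ₖ M) * W₁ ∧ IsUnit calP ∧ calP⁻¹ * calA = 1 + W₁⁻¹ * W₂ :=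
  preconditioner_factorization_general n s M K hM τ L Uhat A hL hAinv calA calP W₁ W₂ hcalA hcalP
    hW₁ hW₂ hW₁unit
end

section
/- Assume τ M⁻¹K = Q D Q⁻¹ where Q ∈ ℝ^{n×n} is invertible and D = diag(μ₁, …, μ_n) is diagonal, and assume L ⊗ I_n + I_s ⊗ D is invertible. Then 𝒫 is invertible and the preconditioned matrix is similar, via I_s ⊗ Q, to the Kronecker-structured matrix X: 𝒫⁻¹𝒜 = (I_s ⊗ Q) · ( (L ⊗ I_n + I_s ⊗ D)⁻¹ (A⁻¹ ⊗ I_n + I_s ⊗ D) ) · (I_s ⊗ Q)⁻¹. -/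
open Matrix Kronecker

/-!
Both `𝒜` and `𝒫` have the form `B ⊗ M + τ (I ⊗ K) = (I ⊗ M) (B ⊗ I + I ⊗ τ M⁻¹K)`, and
conjugating by `I ⊗ Q` turns `B ⊗ I + I ⊗ D` into `B ⊗ I + I ⊗ Q D Q⁻¹`. Hence
`𝒫 = (I ⊗ M) (I ⊗ Q) (L ⊗ I + I ⊗ D) (I ⊗ Q)⁻¹`, likewise `𝒜` with `A⁻¹` for `L`, and the common
left factors cancel in `𝒫⁻¹ 𝒜`.
-/

namespace Matrix

variable {R : Type*} [CommRing R] {l m : Type*} [Fintype l] [DecidableEq l] [Fintype m] [DecidableEq m]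

theorem conj_inv_mul_conj {S X : Matrix m m R} (Y : Matrix m m R) (hS : IsUnit S) :
    (S * X * S⁻¹)⁻¹ * (S * Y * S⁻¹) = S * (X⁻¹ * Y) * S⁻¹ := by
  have hSd := (isUnit_iff_isUnit_det S).mp hS
  rw [mul_inv_rev, mul_inv_rev, nonsing_inv_nonsing_inv S hSd]
  simp only [Matrix.mul_assoc, nonsing_inv_mul_cancel_left S _ hSd]

theorem mul_inv_mul_mul_cancel_left {N : Matrix m m R} (X Y : Matrix m m R) (hN : IsUnit N) :
    (N * X)⁻¹ * (N * Y) = X⁻¹ * Y := by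
  rw [mul_inv_rev, Matrix.mul_assoc,
    nonsing_inv_mul_cancel_left N Y ((isUnit_iff_isUnit_det N).mp hN)]

theorem one_kronecker_mul_kronecker_one_add_one_kronecker (B : Matrix l l R) (N C : Matrix m m R) :
    ((1 : Matrix l l R) ⊗ₖ N) * (B ⊗ₖ (1 : Matrix m m R) + 1 ⊗ₖ C) = B ⊗ₖ N + 1 ⊗ₖ (N * C) := by
  rw [Matrix.mul_add, ← mul_kronecker_mul, ← mul_kronecker_mul, Matrix.one_mul, Matrix.mul_one,
    Matrix.one_mul]

theorem one_kronecker_conj_kronecker_one_add_one_kronecker (B : Matrix l l R) {Q : Matrix m m R}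
    (D : Matrix m m R) (hQ : IsUnit Q) :
    ((1 : Matrix l l R) ⊗ₖ Q) * (B ⊗ₖ (1 : Matrix m m R) + 1 ⊗ₖ D) * (1 ⊗ₖ Q)⁻¹
      = B ⊗ₖ 1 + 1 ⊗ₖ (Q * D * Q⁻¹) := by
  rw [one_kronecker_mul_kronecker_one_add_one_kronecker, inv_kronecker, inv_one, Matrix.add_mul,
    ← mul_kronecker_mul, ← mul_kronecker_mul, Matrix.mul_one, Matrix.one_mul,
    mul_nonsing_inv Q ((isUnit_iff_isUnit_det Q).mp hQ)]

end Matrix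

theorem preconditioned_similar_kronecker_general
    (n s : ℕ)
    (M K : Matrix (Fin n) (Fin n) ℝ) (hM : IsUnit M) (τ : ℝ)
    (L A : Matrix (Fin s) (Fin s) ℝ)
    (Q : Matrix (Fin n) (Fin n) ℝ) (hQ : IsUnit Q)
    (μ : Fin n → ℝ)
    (hdiag : τ • (M⁻¹ * K) = Q * Matrix.diagonal μ * Q⁻¹)
    (hX : IsUnit (L ⊗ₖ (1 : Matrix (Fin n) (Fin n) ℝ)
        + (1 : Matrix (Fin s) (Fin s) ℝ) ⊗ₖ Matrix.diagonal μ))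
    (calA calP : Matrix (Fin s × Fin n) (Fin s × Fin n) ℝ)
    (hcalA : calA = A⁻¹ ⊗ₖ M + τ • ((1 : Matrix (Fin s) (Fin s) ℝ) ⊗ₖ K))
    (hcalP : calP = L ⊗ₖ M + τ • ((1 : Matrix (Fin s) (Fin s) ℝ) ⊗ₖ K)) :
    IsUnit calP ∧
    calP⁻¹ * calA
      = ((1 : Matrix (Fin s) (Fin s) ℝ) ⊗ₖ Q)
          * ((L ⊗ₖ (1 : Matrix (Fin n) (Fin n) ℝ)
              + (1 : Matrix (Fin s) (Fin s) ℝ) ⊗ₖ Matrix.diagonal μ)⁻¹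
            * (A⁻¹ ⊗ₖ (1 : Matrix (Fin n) (Fin n) ℝ)
              + (1 : Matrix (Fin s) (Fin s) ℝ) ⊗ₖ Matrix.diagonal μ))
          * ((1 : Matrix (Fin s) (Fin s) ℝ) ⊗ₖ Q)⁻¹ := by
  have hIM : IsUnit ((1 : Matrix (Fin s) (Fin s) ℝ) ⊗ₖ M) := isUnit_one.kronecker hM
  have hIQ : IsUnit ((1 : Matrix (Fin s) (Fin s) ℝ) ⊗ₖ Q) := isUnit_one.kronecker hQ
  have factor (B : Matrix (Fin s) (Fin s) ℝ) : B ⊗ₖ M + τ • (1 ⊗ₖ K)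
      = (1 ⊗ₖ M) * ((1 ⊗ₖ Q) * (B ⊗ₖ 1 + 1 ⊗ₖ diagonal μ) * (1 ⊗ₖ Q)⁻¹) := by
    rw [one_kronecker_conj_kronecker_one_add_one_kronecker B _ hQ, ← hdiag,
      one_kronecker_mul_kronecker_one_add_one_kronecker, mul_smul_comm,
      mul_nonsing_inv_cancel_left M K ((isUnit_iff_isUnit_det M).mp hM), kronecker_smul]
  subst hcalA hcalP
  rw [factor, factor, mul_inv_mul_mul_cancel_left _ _ hIM, conj_inv_mul_conj _ hIQ]
  exact ⟨hIM.mul ((hIQ.mul hX).mul (isUnit_nonsing_inv_iff.mpr hIQ)), rfl⟩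

/-- If `τ M⁻¹K = Q D Q⁻¹` with `Q` invertible and `D` diagonal, and
`L ⊗ I_n + I_s ⊗ D` is invertible, then `𝒫` is invertible and
`𝒫⁻¹𝒜 = (I_s ⊗ Q) ((L ⊗ I_n + I_s ⊗ D)⁻¹ (A⁻¹ ⊗ I_n + I_s ⊗ D)) (I_s ⊗ Q)⁻¹`. -/
theorem preconditioned_similar_kronecker
    (n s : ℕ) (hn : 0 < n) (hs : 0 < s)
    (M K : Matrix (Fin n) (Fin n) ℝ) (hM : IsUnit M) (τ : ℝ)
    (L A : Matrix (Fin s) (Fin s) ℝ) (hL : IsUnit L) (hA : IsUnit A)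
    (Q : Matrix (Fin n) (Fin n) ℝ) (hQ : IsUnit Q)
    (μ : Fin n → ℝ)
    (hdiag : τ • (M⁻¹ * K) = Q * Matrix.diagonal μ * Q⁻¹)
    (hX : IsUnit (L ⊗ₖ (1 : Matrix (Fin n) (Fin n) ℝ)
        + (1 : Matrix (Fin s) (Fin s) ℝ) ⊗ₖ Matrix.diagonal μ))
    (calA calP : Matrix (Fin s × Fin n) (Fin s × Fin n) ℝ)
    (hcalA : calA = A⁻¹ ⊗ₖ M + τ • ((1 : Matrix (Fin s) (Fin s) ℝ) ⊗ₖ K))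
    (hcalP : calP = L ⊗ₖ M + τ • ((1 : Matrix (Fin s) (Fin s) ℝ) ⊗ₖ K)) :
    IsUnit calP ∧
    calP⁻¹ * calA
      = ((1 : Matrix (Fin s) (Fin s) ℝ) ⊗ₖ Q)
          * ((L ⊗ₖ (1 : Matrix (Fin n) (Fin n) ℝ)
              + (1 : Matrix (Fin s) (Fin s) ℝ) ⊗ₖ Matrix.diagonal μ)⁻¹
            * (A⁻¹ ⊗ₖ (1 : Matrix (Fin n) (Fin n) ℝ)
              + (1 : Matrix (Fin s) (Fin s) ℝ) ⊗ₖ Matrix.diagonal μ))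
          * ((1 : Matrix (Fin s) (Fin s) ℝ) ⊗ₖ Q)⁻¹ :=
  preconditioned_similar_kronecker_general n s M K hM τ L A Q hQ μ hdiag hX calA calP hcalA hcalP
end

section
/- Let μ ∈ ℝ, λ ∈ ℝ, let q ∈ ℝⁿ satisfy the generalized eigenvector equation τ K q = μ M q, and let σ ∈ ℝ^s satisfy (A⁻¹ + μ I_s) σ = λ (L + μ I_s) σ. Then the Kronecker-product vector σ ⊗ q satisfies 𝒜 (σ ⊗ q) = λ · 𝒫 (σ ⊗ q). In particular, if 𝒫 is invertible and σ ⊗ q ≠ 0, then (λ, σ ⊗ q) is an eigenpair of the preconditioned matrix 𝒫⁻¹𝒜. -/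
/-!
If `τ K q = μ M q`, then on the pure tensor `σ ⊗ q` the term `τ (I ⊗ K)` acts as `μ (I ⊗ M)`, so
`(B ⊗ M + τ I ⊗ K)(σ ⊗ q) = ((B + μ I) σ) ⊗ (M q)` for every `B`. Taking `B = A⁻¹` and `B = L`,
the generalized eigenvalue relation for `σ` turns into `𝒜 (σ ⊗ q) = λ 𝒫 (σ ⊗ q)`.
-/

open Matrix Kronecker

namespace Matrix

theorem kronecker_mulVec_kronecker_vec {R l m n p : Type*} [CommSemiring R] [Fintype m]
    [Fintype n] (B : Matrix l m R) (C : Matrix p n R) (σ : m → R) (q : n → R) :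
    (B ⊗ₖ C) *ᵥ (fun ip : m × n => σ ip.1 * q ip.2)
      = fun ip : l × p => (B *ᵥ σ) ip.1 * (C *ᵥ q) ip.2 := by
  funext ip
  simp only [mulVec, dotProduct, Fintype.sum_prod_type, kroneckerMap_apply, Finset.sum_mul_sum]
  exact Finset.sum_congr rfl fun j _ => Finset.sum_congr rfl fun r _ => by ring

theorem kronecker_add_smul_one_kronecker_mulVec {R m n : Type*} [CommRing R] [Fintype m]
    [DecidableEq m] [Fintype n] {M K : Matrix n n R} {τ μ : R} {q : n → R}
    (hq : τ • (K *ᵥ q) = μ • (M *ᵥ q)) (B : Matrix m m R) (σ : m → R) :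
    (B ⊗ₖ M + τ • ((1 : Matrix m m R) ⊗ₖ K)) *ᵥ (fun ip : m × n => σ ip.1 * q ip.2)
      = fun ip : m × n => ((B + μ • (1 : Matrix m m R)) *ᵥ σ) ip.1 * (M *ᵥ q) ip.2 := by
  funext ip
  have hq_at : τ * (K *ᵥ q) ip.2 = μ * (M *ᵥ q) ip.2 := by simpa using congrFun hq ip.2
  simp only [add_mulVec, smul_mulVec, kronecker_mulVec_kronecker_vec, one_mulVec, Pi.add_apply,
    Pi.smul_apply, smul_eq_mul]
  linear_combination σ ip.1 * hq_at

theorem hasEigenvector_nonsing_inv_mul {R ι : Type*} [CommRing R] [Fintype ι] [DecidableEq ι]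
    {A P : Matrix ι ι R} {v : ι → R} {c : R} (hAP : A *ᵥ v = c • (P *ᵥ v)) (hP : IsUnit P)
    (hv : v ≠ 0) : Module.End.HasEigenvector (P⁻¹ * A).mulVecLin c v := by
  refine ⟨?_, hv⟩
  rw [Module.End.mem_eigenspace_iff, mulVecLin_apply, ← mulVec_mulVec, hAP, mulVec_smul,
    mulVec_mulVec, nonsing_inv_mul _ ((isUnit_iff_isUnit_det P).mp hP), one_mulVec]

end Matrix

theorem kronecker_eigenvector_of_preconditioned_general
    (n s : ℕ)
    (M K : Matrix (Fin n) (Fin n) ℝ) (τ : ℝ)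
    (L A : Matrix (Fin s) (Fin s) ℝ)
    (calA calP : Matrix (Fin s × Fin n) (Fin s × Fin n) ℝ)
    (hcalA : calA = A⁻¹ ⊗ₖ M + τ • ((1 : Matrix (Fin s) (Fin s) ℝ) ⊗ₖ K))
    (hcalP : calP = L ⊗ₖ M + τ • ((1 : Matrix (Fin s) (Fin s) ℝ) ⊗ₖ K))
    (μ lam : ℝ) (q : Fin n → ℝ) (σ : Fin s → ℝ)
    (hq : τ • (K *ᵥ q) = μ • (M *ᵥ q))
    (hσ : (A⁻¹ + μ • (1 : Matrix (Fin s) (Fin s) ℝ)) *ᵥ σ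
        = lam • ((L + μ • (1 : Matrix (Fin s) (Fin s) ℝ)) *ᵥ σ)) :
    calA *ᵥ (fun ip : Fin s × Fin n => σ ip.1 * q ip.2)
        = lam • (calP *ᵥ (fun ip : Fin s × Fin n => σ ip.1 * q ip.2)) ∧
    (IsUnit calP → (fun ip : Fin s × Fin n => σ ip.1 * q ip.2) ≠ 0 →
      Module.End.HasEigenvector (calP⁻¹ * calA).mulVecLin lam
        (fun ip : Fin s × Fin n => σ ip.1 * q ip.2)) := by
  have hpencil : calA *ᵥ (fun ip : Fin s × Fin n => σ ip.1 * q ip.2)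
      = lam • (calP *ᵥ (fun ip : Fin s × Fin n => σ ip.1 * q ip.2)) := by
    rw [hcalA, hcalP, kronecker_add_smul_one_kronecker_mulVec hq,
      kronecker_add_smul_one_kronecker_mulVec hq, hσ]
    funext ip
    simp only [Pi.smul_apply, smul_eq_mul, mul_assoc]
  exact ⟨hpencil, fun hP hv => hasEigenvector_nonsing_inv_mul hpencil hP hv⟩

/-- If `τ K q = μ M q` and `(A⁻¹ + μ I_s) σ = λ (L + μ I_s) σ`, then
the Kronecker vector `σ ⊗ q` satisfies `𝒜 (σ ⊗ q) = λ 𝒫 (σ ⊗ q)`; in particular,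
if `𝒫` is invertible and `σ ⊗ q ≠ 0`, then `(λ, σ ⊗ q)` is an eigenpair of
`𝒫⁻¹𝒜`. -/
theorem kronecker_eigenvector_of_preconditioned
    (n s : ℕ) (hn : 0 < n) (hs : 0 < s)
    (M K : Matrix (Fin n) (Fin n) ℝ) (τ : ℝ)
    (L A : Matrix (Fin s) (Fin s) ℝ) (hL : IsUnit L) (hA : IsUnit A)
    (calA calP : Matrix (Fin s × Fin n) (Fin s × Fin n) ℝ)
    (hcalA : calA = A⁻¹ ⊗ₖ M + τ • ((1 : Matrix (Fin s) (Fin s) ℝ) ⊗ₖ K))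
    (hcalP : calP = L ⊗ₖ M + τ • ((1 : Matrix (Fin s) (Fin s) ℝ) ⊗ₖ K))
    (μ lam : ℝ) (q : Fin n → ℝ) (σ : Fin s → ℝ)
    (hq : τ • (K *ᵥ q) = μ • (M *ᵥ q))
    (hσ : (A⁻¹ + μ • (1 : Matrix (Fin s) (Fin s) ℝ)) *ᵥ σ
        = lam • ((L + μ • (1 : Matrix (Fin s) (Fin s) ℝ)) *ᵥ σ)) :
    calA *ᵥ (fun ip : Fin s × Fin n => σ ip.1 * q ip.2)
        = lam • (calP *ᵥ (fun ip : Fin s × Fin n => σ ip.1 * q ip.2)) ∧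
    (IsUnit calP → (fun ip : Fin s × Fin n => σ ip.1 * q ip.2) ≠ 0 →
      Module.End.HasEigenvector (calP⁻¹ * calA).mulVecLin lam
        (fun ip : Fin s × Fin n => σ ip.1 * q ip.2)) :=
  kronecker_eigenvector_of_preconditioned_general n s M K τ L A calA calP hcalA hcalP μ lam q σ hq
    hσ
end

section
/- Assume τ M⁻¹K = Q D Q⁻¹ where Q ∈ ℝ^{n×n} is invertible and D = diag(μ₁, …, μ_n), and assume L + μ_k I_s is invertible for every k. Then the characteristic polynomial of the preconditioned matrix factors over the eigenvalues of τ M⁻¹K: charpoly(𝒫⁻¹𝒜) = ∏_{k=1}^{n} charpoly(X_{μ_k}), where X_μ := (L + μ I_s)⁻¹ (A⁻¹ + μ I_s) ∈ ℝ^{s×s}. -/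
open Matrix Kronecker Polynomial

/-!
Writing `τ K = M Q D Q⁻¹`, every matrix `Z ⊗ M + τ (I ⊗ K)` factors as
`(I ⊗ M Q) · blockDiagonal (Z + μ_k I) · (I ⊗ Q⁻¹)`. Taking `Z = L` and `Z = A⁻¹`, the outer
factors cancel in `𝒫⁻¹ 𝒜` up to a similarity by `I ⊗ Q⁻¹`, which leaves the block diagonal
matrix with blocks `X_{μ_k}`, whose characteristic polynomial is the product of theirs.
-/

namespace Matrix

variable {R : Type*} [CommRing R] {m o : Type*} [DecidableEq m] [DecidableEq o]

theorem kronecker_one_add_one_kronecker_diagonal (Z : Matrix m m R) (μ : o → R) :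
    Z ⊗ₖ (1 : Matrix o o R) + 1 ⊗ₖ diagonal μ = blockDiagonal fun k => Z + μ k • 1 := by
  rw [kronecker_one, kronecker_diagonal, ← blockDiagonal_add]
  simp only [Pi.add_def, op_smul_eq_smul]

variable [Fintype m] [Fintype o]

theorem charmatrix_blockDiagonal (f : o → Matrix m m R) :
    charmatrix (blockDiagonal f) = blockDiagonal fun k => charmatrix (f k) := by
  rw [charmatrix, scalar_apply, RingHom.mapMatrix_apply, blockDiagonal_map _ _ (map_zero _)]
  change _ = blockDiagonal ((fun _ => diagonal fun _ => X) - fun k => (f k).map C)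
  rw [blockDiagonal_sub, blockDiagonal_diagonal]

theorem charpoly_blockDiagonal (f : o → Matrix m m R) :
    (blockDiagonal f).charpoly = ∏ k, (f k).charpoly := by
  rw [charpoly, charmatrix_blockDiagonal, det_blockDiagonal]
  rfl

theorem inv_blockDiagonal {f : o → Matrix m m R} (hf : ∀ k, IsUnit (f k)) :
    (blockDiagonal f)⁻¹ = blockDiagonal fun k => (f k)⁻¹ := by
  refine inv_eq_right_inv ?_
  rw [← blockDiagonal_mul, ← blockDiagonal_one]
  congr 1
  funext k
  exact mul_nonsing_inv _ ((isUnit_iff_isUnit_det _).mp (hf k))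

theorem charpoly_inv_mul_conj {X Y : Matrix m m R} (hX : IsUnit X) (hY : IsUnit Y)
    (B C : Matrix m m R) :
    ((X * B * Y)⁻¹ * (X * C * Y)).charpoly = (B⁻¹ * C).charpoly := by
  have hXX : X⁻¹ * X = 1 := nonsing_inv_mul X ((isUnit_iff_isUnit_det X).mp hX)
  have : (X * B * Y)⁻¹ * (X * C * Y) = Y⁻¹ * (B⁻¹ * C) * Y := by
    simp only [mul_inv_rev, Matrix.mul_assoc]
    rw [← Matrix.mul_assoc X⁻¹, hXX, Matrix.one_mul]
  rw [this]
  exact charpoly_units_conj' hY.unit _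

variable {n : Type*} [Fintype n] [DecidableEq n]

theorem kronecker_add_one_kronecker_conj_diagonal {M Q : Matrix n n R} (hQ : IsUnit Q)
    (μ : n → R) (Z : Matrix m m R) :
    Z ⊗ₖ M + 1 ⊗ₖ (M * Q * diagonal μ * Q⁻¹)
      = 1 ⊗ₖ (M * Q) * blockDiagonal (fun k => Z + μ k • 1) * (1 ⊗ₖ Q⁻¹) := by
  have hQQ : Q * Q⁻¹ = 1 := mul_nonsing_inv Q ((isUnit_iff_isUnit_det Q).mp hQ)
  rw [← kronecker_one_add_one_kronecker_diagonal, Matrix.mul_add, Matrix.add_mul,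
    ← mul_kronecker_mul, ← mul_kronecker_mul, ← mul_kronecker_mul, ← mul_kronecker_mul]
  simp only [Matrix.mul_one, Matrix.one_mul, Matrix.mul_assoc, hQQ]

end Matrix

theorem charpoly_preconditioned_factors_general
    (n s : ℕ)
    (M K : Matrix (Fin n) (Fin n) ℝ) (hM : IsUnit M) (τ : ℝ)
    (L A : Matrix (Fin s) (Fin s) ℝ)
    (Q : Matrix (Fin n) (Fin n) ℝ) (hQ : IsUnit Q)
    (μ : Fin n → ℝ)
    (hdiag : τ • (M⁻¹ * K) = Q * Matrix.diagonal μ * Q⁻¹)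
    (hk : ∀ k : Fin n, IsUnit (L + μ k • (1 : Matrix (Fin s) (Fin s) ℝ)))
    (calA calP : Matrix (Fin s × Fin n) (Fin s × Fin n) ℝ)
    (hcalA : calA = A⁻¹ ⊗ₖ M + τ • ((1 : Matrix (Fin s) (Fin s) ℝ) ⊗ₖ K))
    (hcalP : calP = L ⊗ₖ M + τ • ((1 : Matrix (Fin s) (Fin s) ℝ) ⊗ₖ K)) :
    (calP⁻¹ * calA).charpoly
      = ∏ k : Fin n,
          ((L + μ k • (1 : Matrix (Fin s) (Fin s) ℝ))⁻¹
            * (A⁻¹ + μ k • (1 : Matrix (Fin s) (Fin s) ℝ))).charpoly := by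
  have hτK : τ • K = M * Q * diagonal μ * Q⁻¹ := by
    rw [Matrix.mul_assoc M, Matrix.mul_assoc M, ← hdiag, mul_smul_comm, ← Matrix.mul_assoc,
      mul_nonsing_inv M ((isUnit_iff_isUnit_det M).mp hM), Matrix.one_mul]
  have hMQ : IsUnit ((1 : Matrix (Fin s) (Fin s) ℝ) ⊗ₖ (M * Q)) :=
    isUnit_one.kronecker (hM.mul hQ)
  have hQinv : IsUnit ((1 : Matrix (Fin s) (Fin s) ℝ) ⊗ₖ Q⁻¹) :=
    isUnit_one.kronecker (isUnit_nonsing_inv_iff.mpr hQ)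
  rw [hcalP, hcalA, ← kronecker_smul, hτK, kronecker_add_one_kronecker_conj_diagonal hQ,
    kronecker_add_one_kronecker_conj_diagonal hQ, charpoly_inv_mul_conj hMQ hQinv,
    inv_blockDiagonal hk, ← blockDiagonal_mul, charpoly_blockDiagonal]

/-- If `τ M⁻¹K = Q D Q⁻¹` with `Q` invertible and
`D = diag(μ₁,…,μ_n)`, and `L + μ_k I_s` is invertible for every `k`, then
`charpoly(𝒫⁻¹𝒜) = ∏_{k=1}^n charpoly(X_{μ_k})` with
`X_μ := (L + μ I_s)⁻¹ (A⁻¹ + μ I_s)`. -/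
theorem charpoly_preconditioned_factors
    (n s : ℕ) (hn : 0 < n) (hs : 0 < s)
    (M K : Matrix (Fin n) (Fin n) ℝ) (hM : IsUnit M) (τ : ℝ)
    (L A : Matrix (Fin s) (Fin s) ℝ) (hL : IsUnit L) (hA : IsUnit A)
    (Q : Matrix (Fin n) (Fin n) ℝ) (hQ : IsUnit Q)
    (μ : Fin n → ℝ)
    (hdiag : τ • (M⁻¹ * K) = Q * Matrix.diagonal μ * Q⁻¹)
    (hk : ∀ k : Fin n, IsUnit (L + μ k • (1 : Matrix (Fin s) (Fin s) ℝ)))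
    (calA calP : Matrix (Fin s × Fin n) (Fin s × Fin n) ℝ)
    (hcalA : calA = A⁻¹ ⊗ₖ M + τ • ((1 : Matrix (Fin s) (Fin s) ℝ) ⊗ₖ K))
    (hcalP : calP = L ⊗ₖ M + τ • ((1 : Matrix (Fin s) (Fin s) ℝ) ⊗ₖ K))
    (hP : IsUnit calP) :
    (calP⁻¹ * calA).charpoly
      = ∏ k : Fin n,
          ((L + μ k • (1 : Matrix (Fin s) (Fin s) ℝ))⁻¹
            * (A⁻¹ + μ k • (1 : Matrix (Fin s) (Fin s) ℝ))).charpoly :=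
  charpoly_preconditioned_factors_general n s M K hM τ L A Q hQ μ hdiag hk calA calP hcalA hcalP
end

section
/- Let μ ∈ ℝ be such that L + μ I_s is invertible, and set X_μ := (L + μ I_s)⁻¹ (A⁻¹ + μ I_s). Then for every λ ∈ ℝ, det(λ I_s − X_μ) = det((λ−1) I_s − (I_s + μ L⁻¹)⁻¹ Û), i.e., the characteristic polynomial of X_μ equals the characteristic polynomial of (I_s + μ L⁻¹)⁻¹ Û shifted by 1. -/
/-!
Factor `L + μ I = L (I + μ L⁻¹)`. Since `A⁻¹ + μ I = (L + μ I) + L Û`, this gives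
`X_μ = I + (I + μ L⁻¹)⁻¹ Û`, and subtracting the identity shifts the characteristic
polynomial by one.
-/

open Matrix

variable {n R : Type*} [Fintype n] [DecidableEq n] [CommRing R]

theorem Matrix.mul_one_add_smul_inv {L : Matrix n n R} (hL : IsUnit L.det) (μ : R) :
    L * (1 + μ • L⁻¹) = L + μ • 1 := by
  rw [mul_add, mul_one, Matrix.mul_smul, mul_nonsing_inv L hL]

theorem Matrix.inv_add_smul_one {L : Matrix n n R} (hL : IsUnit L.det) (μ : R) :
    (L + μ • 1)⁻¹ = (1 + μ • L⁻¹)⁻¹ * L⁻¹ := by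
  rw [← mul_one_add_smul_inv hL, mul_inv_rev]

theorem Matrix.inv_add_smul_one_mul_eq_one_add {L U : Matrix n n R} (hL : IsUnit L.det) (μ : R)
    (hμ : IsUnit (L + μ • 1).det) :
    (L + μ • 1)⁻¹ * (L * (1 + U) + μ • 1) = 1 + (1 + μ • L⁻¹)⁻¹ * U := by
  have hsplit : L * (1 + U) + μ • 1 = (L + μ • 1) + L * U := by
    rw [mul_add, mul_one, add_right_comm]
  rw [hsplit, mul_add, nonsing_inv_mul _ hμ, inv_add_smul_one hL, mul_assoc, ← mul_assoc L⁻¹,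
    nonsing_inv_mul L hL, one_mul]

theorem charpoly_X_mu_shift_general
    (s : ℕ)
    (L Uhat A : Matrix (Fin s) (Fin s) ℝ)
    (hL : IsUnit L)
    (hAinv : A⁻¹ = L * (1 + Uhat))
    (μ : ℝ) (hμ : IsUnit (L + μ • (1 : Matrix (Fin s) (Fin s) ℝ))) :
    ∀ lam : ℝ,
      (lam • (1 : Matrix (Fin s) (Fin s) ℝ)
          - (L + μ • (1 : Matrix (Fin s) (Fin s) ℝ))⁻¹
              * (A⁻¹ + μ • (1 : Matrix (Fin s) (Fin s) ℝ))).det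
        = ((lam - 1) • (1 : Matrix (Fin s) (Fin s) ℝ)
            - ((1 : Matrix (Fin s) (Fin s) ℝ) + μ • L⁻¹)⁻¹ * Uhat).det := by
  intro lam
  rw [hAinv, inv_add_smul_one_mul_eq_one_add ((isUnit_iff_isUnit_det L).mp hL) μ
    ((isUnit_iff_isUnit_det _).mp hμ), sub_smul, one_smul]
  congr 1
  abel

/-- If `L + μ I_s` is invertible and
`X_μ := (L + μ I_s)⁻¹ (A⁻¹ + μ I_s)`, then for every `λ`,
`det(λ I_s − X_μ) = det((λ−1) I_s − (I_s + μ L⁻¹)⁻¹ Û)`. -/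
theorem charpoly_X_mu_shift
    (s : ℕ) (hs : 0 < s)
    (L Uhat A : Matrix (Fin s) (Fin s) ℝ)
    (hL : IsUnit L) (hA : IsUnit A)
    (hUhat : ∀ i j : Fin s, j ≤ i → Uhat i j = 0)
    (hAinv : A⁻¹ = L * (1 + Uhat))
    (μ : ℝ) (hμ : IsUnit (L + μ • (1 : Matrix (Fin s) (Fin s) ℝ))) :
    ∀ lam : ℝ,
      (lam • (1 : Matrix (Fin s) (Fin s) ℝ)
          - (L + μ • (1 : Matrix (Fin s) (Fin s) ℝ))⁻¹
              * (A⁻¹ + μ • (1 : Matrix (Fin s) (Fin s) ℝ))).det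
        = ((lam - 1) • (1 : Matrix (Fin s) (Fin s) ℝ)
            - ((1 : Matrix (Fin s) (Fin s) ℝ) + μ • L⁻¹)⁻¹ * Uhat).det :=
  charpoly_X_mu_shift_general s L Uhat A hL hAinv μ hμ
end

section
/- Let μ ∈ ℝ be such that L + μ I_s is invertible, and set X_μ := (L + μ I_s)⁻¹ (A⁻¹ + μ I_s). Then for every λ ∈ ℝ and every σ ∈ ℝ^s, the generalized eigenvalue equation Û σ = λ (I_s + μ L⁻¹) σ holds if and only if X_μ σ = (1+λ) σ. In particular, (λ, σ) is a generalized eigenpair of the scalar pencil Û − λ(I_s + μ L⁻¹) exactly when (1+λ, σ) is an eigenpair of X_μ; this identifies the s×s eigenproblems arising in the polynomial approach with those of the matrix approach. -/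
/-! Since `A⁻¹ + μ I = (L + μ I) + L Û`, both equations are equivalent to
`L Û σ = λ (L + μ I) σ`: the pencil after multiplying by `L`, the eigen-equation after
splitting off `σ` and multiplying by `L + μ I`. -/

open Matrix

namespace Matrix

variable {n α : Type*} [Fintype n] [DecidableEq n] [CommRing α]

theorem inv_mulVec_eq_iff_eq_mulVec {A : Matrix n n α} (hA : IsUnit A) {u v : n → α} :
    A⁻¹ *ᵥ u = v ↔ u = A *ᵥ v := by
  have hdet : IsUnit A.det := (isUnit_iff_isUnit_det A).mp hA
  constructor
  · rintro rfl
    rw [mulVec_mulVec, mul_nonsing_inv A hdet, one_mulVec]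
  · rintro rfl
    rw [mulVec_mulVec, nonsing_inv_mul A hdet, one_mulVec]

theorem inv_mul_add_smul_one {L : Matrix n n α} (hL : IsUnit L) (μ : α) :
    L⁻¹ * (L + μ • 1) = 1 + μ • L⁻¹ := by
  rw [mul_add, nonsing_inv_mul L ((isUnit_iff_isUnit_det L).mp hL), mul_smul_comm, mul_one]

theorem inv_mul_self_add_mulVec {M : Matrix n n α} (hM : IsUnit M) (B : Matrix n n α)
    (v : n → α) : (M⁻¹ * (M + B)) *ᵥ v = v + M⁻¹ *ᵥ (B *ᵥ v) := by
  rw [mul_add, nonsing_inv_mul M ((isUnit_iff_isUnit_det M).mp hM), add_mulVec, one_mulVec,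
    mulVec_mulVec]

end Matrix

theorem scalar_pencil_iff_X_mu_eigen_general
    (s : ℕ)
    (L Uhat A : Matrix (Fin s) (Fin s) ℝ)
    (hL : IsUnit L)
    (hAinv : A⁻¹ = L * (1 + Uhat))
    (μ : ℝ) (hμ : IsUnit (L + μ • (1 : Matrix (Fin s) (Fin s) ℝ))) :
    ∀ (lam : ℝ) (σ : Fin s → ℝ),
      Uhat *ᵥ σ = lam • (((1 : Matrix (Fin s) (Fin s) ℝ) + μ • L⁻¹) *ᵥ σ)
        ↔ ((L + μ • (1 : Matrix (Fin s) (Fin s) ℝ))⁻¹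
            * (A⁻¹ + μ • (1 : Matrix (Fin s) (Fin s) ℝ))) *ᵥ σ = (1 + lam) • σ := by
  intro lam σ
  have hsplit : A⁻¹ + μ • 1 = (L + μ • 1) + L * Uhat := by
    rw [hAinv, mul_add, mul_one, add_right_comm]
  have pencil_iff : Uhat *ᵥ σ = lam • ((1 + μ • L⁻¹) *ᵥ σ)
      ↔ L *ᵥ (Uhat *ᵥ σ) = lam • ((L + μ • 1) *ᵥ σ) := by
    rw [← inv_mul_add_smul_one hL μ, ← mulVec_mulVec, ← mulVec_smul, eq_comm,
      inv_mulVec_eq_iff_eq_mulVec hL, eq_comm]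
  have eigen_iff : ((L + μ • 1)⁻¹ * (A⁻¹ + μ • 1)) *ᵥ σ = (1 + lam) • σ
      ↔ L *ᵥ (Uhat *ᵥ σ) = lam • ((L + μ • 1) *ᵥ σ) := by
    rw [hsplit, inv_mul_self_add_mulVec hμ, add_smul, one_smul, add_right_inj,
      inv_mulVec_eq_iff_eq_mulVec hμ, mulVec_smul, mulVec_mulVec]
  rw [pencil_iff, eigen_iff]

/-- If `L + μ I_s` is invertible and
`X_μ := (L + μ I_s)⁻¹ (A⁻¹ + μ I_s)`, then for every `λ ∈ ℝ` and `σ ∈ ℝ^s`,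
`Û σ = λ (I_s + μ L⁻¹) σ` if and only if `X_μ σ = (1+λ) σ`. -/
theorem scalar_pencil_iff_X_mu_eigen
    (s : ℕ) (hs : 0 < s)
    (L Uhat A : Matrix (Fin s) (Fin s) ℝ)
    (hL : IsUnit L) (hA : IsUnit A)
    (hUhat : ∀ i j : Fin s, j ≤ i → Uhat i j = 0)
    (hAinv : A⁻¹ = L * (1 + Uhat))
    (μ : ℝ) (hμ : IsUnit (L + μ • (1 : Matrix (Fin s) (Fin s) ℝ))) :
    ∀ (lam : ℝ) (σ : Fin s → ℝ),
      Uhat *ᵥ σ = lam • (((1 : Matrix (Fin s) (Fin s) ℝ) + μ • L⁻¹) *ᵥ σ)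
        ↔ ((L + μ • (1 : Matrix (Fin s) (Fin s) ℝ))⁻¹
            * (A⁻¹ + μ • (1 : Matrix (Fin s) (Fin s) ℝ))) *ᵥ σ = (1 + lam) • σ :=
  scalar_pencil_iff_X_mu_eigen_general s L Uhat A hL hAinv μ hμ
end

section
/- Assume 𝒫 is invertible. Then 1 is an eigenvalue of the preconditioned matrix 𝒫⁻¹𝒜 with geometric multiplicity at least n; that is, the kernel of 𝒫⁻¹𝒜 − I_{sn} has dimension at least n. -/
/-!
Since `A⁻¹ = L + L Û`, the two matrices differ by `𝒜 - 𝒫 = (L Û) ⊗ M`, so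
`𝒫⁻¹𝒜 - I = 𝒫⁻¹ ((L Û) ⊗ M)`. The first column of `Û`, hence of `L Û`, vanishes, so
`(L Û) ⊗ M` kills every vector `e₁ ⊗ w` with `w ∈ ℝⁿ`, an `n`-dimensional space.
-/

open Matrix Kronecker

namespace Matrix

variable {R ι ι' κ κ' : Type*}

theorem mul_apply_eq_zero_of_col_eq_zero [NonUnitalNonAssocSemiring R] [Fintype ι']
    (B : Matrix ι ι' R) (C : Matrix ι' κ R) {j : κ} (hC : ∀ m, C m j = 0) (i : ι) :
    (B * C) i j = 0 := by
  simp [mul_apply, hC]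

theorem kronecker_mulVec_uncurry_single [Semiring R] [Fintype ι'] [Fintype κ'] [DecidableEq ι']
    (B : Matrix ι ι' R) (C : Matrix κ κ' R) (j : ι') (w : κ' → R) :
    (B ⊗ₖ C) *ᵥ Function.uncurry (Pi.single j w) =
      Function.uncurry fun i => B i j • (C *ᵥ w) := by
  ext ⟨i, k⟩
  simp only [mulVec, dotProduct, Fintype.sum_prod_type, kronecker_apply, Function.uncurry_apply_pair,
    Pi.smul_apply, smul_eq_mul, Finset.mul_sum, mul_assoc]
  rw [Finset.sum_eq_single j (fun j' _ hj' => by simp [Pi.single_eq_of_ne hj']) (by simp)]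
  simp

theorem card_le_finrank_ker_kronecker_of_col_eq_zero [Field R] [Fintype ι'] [Fintype κ']
    [DecidableEq ι'] (B : Matrix ι ι' R) (C : Matrix κ κ' R) {j : ι'} (hB : ∀ i, B i j = 0) :
    Fintype.card κ' ≤ Module.finrank R (LinearMap.ker (B ⊗ₖ C).mulVecLin) := by
  let e : (κ' → R) →ₗ[R] (ι' × κ' → R) :=
    (LinearEquiv.curry R R ι' κ').symm.toLinearMap ∘ₗ LinearMap.single R (fun _ => κ' → R) j
  have he : Function.Injective e :=
    (LinearEquiv.curry R R ι' κ').symm.injective.comp (Pi.single_injective (M := fun _ => κ' → R) j)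
  have hrange : LinearMap.range e ≤ LinearMap.ker (B ⊗ₖ C).mulVecLin := by
    rintro _ ⟨w, rfl⟩
    ext ⟨i, k⟩
    simp [e, kronecker_mulVec_uncurry_single, hB]
  calc Fintype.card κ' = Module.finrank R (LinearMap.range e) := by
        rw [LinearMap.finrank_range_of_inj he, Module.finrank_fintype_fun_eq_card]
    _ ≤ _ := Submodule.finrank_mono hrange

end Matrix

theorem one_eigenvalue_multiplicity_n_general
    (n s : ℕ) (hs : 0 < s)
    (M K : Matrix (Fin n) (Fin n) ℝ) (τ : ℝ)
    (L Uhat A : Matrix (Fin s) (Fin s) ℝ)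
    (hUhat : ∀ i j : Fin s, j ≤ i → Uhat i j = 0)
    (hAinv : A⁻¹ = L * (1 + Uhat))
    (calA calP : Matrix (Fin s × Fin n) (Fin s × Fin n) ℝ)
    (hcalA : calA = A⁻¹ ⊗ₖ M + τ • ((1 : Matrix (Fin s) (Fin s) ℝ) ⊗ₖ K))
    (hcalP : calP = L ⊗ₖ M + τ • ((1 : Matrix (Fin s) (Fin s) ℝ) ⊗ₖ K))
    (hP : IsUnit calP) :
    n ≤ Module.finrank ℝ
        (LinearMap.ker (calP⁻¹ * calA
          - (1 : Matrix (Fin s × Fin n) (Fin s × Fin n) ℝ)).mulVecLin) := by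
  have hdiff : calA = calP + (L * Uhat) ⊗ₖ M := by
    rw [hcalA, hcalP, hAinv, mul_add, mul_one, add_kronecker]
    abel
  have hprecond : calP⁻¹ * calA - 1 = calP⁻¹ * ((L * Uhat) ⊗ₖ M) := by
    rw [hdiff, mul_add, nonsing_inv_mul _ ((isUnit_iff_isUnit_det _).mp hP)]
    abel
  have hcol : ∀ i, (L * Uhat) i ⟨0, hs⟩ = 0 :=
    mul_apply_eq_zero_of_col_eq_zero L Uhat fun m => hUhat m _ (Nat.zero_le _)
  calc n = Fintype.card (Fin n) := (Fintype.card_fin n).symm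
    _ ≤ Module.finrank ℝ (LinearMap.ker ((L * Uhat) ⊗ₖ M).mulVecLin) :=
        card_le_finrank_ker_kronecker_of_col_eq_zero _ M hcol
    _ ≤ _ := by
        rw [hprecond, mulVecLin_mul]
        exact Submodule.finrank_mono (LinearMap.ker_le_ker_comp _ _)

/-- If `𝒫` is invertible, then `1` is an eigenvalue of `𝒫⁻¹𝒜`
with geometric multiplicity at least `n`: the kernel of `𝒫⁻¹𝒜 − I_{sn}` has
dimension at least `n`. -/
theorem one_eigenvalue_multiplicity_n
    (n s : ℕ) (hn : 0 < n) (hs : 0 < s)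
    (M K : Matrix (Fin n) (Fin n) ℝ) (hM : IsUnit M) (τ : ℝ)
    (L Uhat A : Matrix (Fin s) (Fin s) ℝ)
    (hL : IsUnit L) (hA : IsUnit A)
    (hUhat : ∀ i j : Fin s, j ≤ i → Uhat i j = 0)
    (hAinv : A⁻¹ = L * (1 + Uhat))
    (calA calP : Matrix (Fin s × Fin n) (Fin s × Fin n) ℝ)
    (hcalA : calA = A⁻¹ ⊗ₖ M + τ • ((1 : Matrix (Fin s) (Fin s) ℝ) ⊗ₖ K))
    (hcalP : calP = L ⊗ₖ M + τ • ((1 : Matrix (Fin s) (Fin s) ℝ) ⊗ₖ K))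
    (hP : IsUnit calP) :
    n ≤ Module.finrank ℝ
        (LinearMap.ker (calP⁻¹ * calA
          - (1 : Matrix (Fin s × Fin n) (Fin s × Fin n) ℝ)).mulVecLin) :=
  one_eigenvalue_multiplicity_n_general n s hs M K τ L Uhat A hUhat hAinv calA calP hcalA hcalP hP
end

section
/- Assume τ M⁻¹K = Q D Q⁻¹ where Q ∈ ℝ^{n×n} is invertible and D = diag(μ₁, …, μ_n). Then the characteristic polynomial of the pencil W₂ − λW₁ factors completely into the n scalar s×s pencils parametrized by the eigenvalues μ_k: for every λ ∈ ℝ, det(W₂ − λ W₁) = ∏_{k=1}^{n} det( Û − λ (I_s + μ_k L⁻¹) ). -/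
/-! Writing `W₂ − λW₁ = (Û − λI) ⊗ I + (−λL⁻¹) ⊗ (τM⁻¹K)` and conjugating by `I ⊗ Q` replaces
`τM⁻¹K` by the diagonal matrix `D`; a Kronecker product with a diagonal right factor is block
diagonal, so the pencil splits into the blocks `Û − λ(I + μ_k L⁻¹)`. -/

open Matrix Kronecker

namespace Matrix

variable {R l m n n' p p' : Type*} [CommRing R]

theorem one_kronecker_mul_kronecker_mul_one_kronecker [Fintype l] [Fintype m] [Fintype n']
    [Fintype p'] [DecidableEq l] [DecidableEq m] (A : Matrix l m R)
    (X : Matrix n n' R) (Y : Matrix n' p' R) (Z : Matrix p' p R) :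
    ((1 : Matrix l l R) ⊗ₖ X) * (A ⊗ₖ Y) * ((1 : Matrix m m R) ⊗ₖ Z) = A ⊗ₖ (X * Y * Z) := by
  rw [← mul_kronecker_mul, ← mul_kronecker_mul, Matrix.one_mul, Matrix.mul_one]

theorem kronecker_one_add_kronecker_diagonal [DecidableEq n] (A B : Matrix l m R) (d : n → R) :
    A ⊗ₖ 1 + B ⊗ₖ diagonal d = blockDiagonal fun k => A + d k • B := by
  rw [kronecker_one, kronecker_diagonal, ← blockDiagonal_add]
  simp only [Pi.add_def, op_smul_eq_smul]

theorem det_kronecker_one_add_kronecker_conj_diagonal [Fintype m] [Fintype n] [DecidableEq m]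
    [DecidableEq n] (A B : Matrix m m R) {Q : Matrix n n R} (hQ : IsUnit Q) (d : n → R) :
    det (A ⊗ₖ 1 + B ⊗ₖ (Q * diagonal d * Q⁻¹)) = ∏ k, det (A + d k • B) := by
  have hQdet := (isUnit_iff_isUnit_det Q).mp hQ
  have hconj : A ⊗ₖ 1 + B ⊗ₖ (Q * diagonal d * Q⁻¹)
      = (1 ⊗ₖ Q) * (A ⊗ₖ 1 + B ⊗ₖ diagonal d) * (1 ⊗ₖ Q⁻¹) := by
    rw [Matrix.mul_add, Matrix.add_mul, one_kronecker_mul_kronecker_mul_one_kronecker,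
      one_kronecker_mul_kronecker_mul_one_kronecker, Matrix.mul_one, mul_nonsing_inv Q hQdet]
  have hright : (1 ⊗ₖ Q) * (1 ⊗ₖ Q⁻¹) = (1 : Matrix (m × n) (m × n) R) := by
    rw [← mul_kronecker_mul, Matrix.one_mul, mul_nonsing_inv Q hQdet, one_kronecker_one]
  have hleft : (1 ⊗ₖ Q⁻¹) * (1 ⊗ₖ Q) = (1 : Matrix (m × n) (m × n) R) := by
    rw [← mul_kronecker_mul, Matrix.one_mul, nonsing_inv_mul Q hQdet, one_kronecker_one]
  rw [hconj, det_conj_of_mul_eq_one hright hleft, kronecker_one_add_kronecker_diagonal,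
    det_blockDiagonal]

end Matrix

theorem det_pencil_factors_over_modes_general
    (n s : ℕ)
    (M K : Matrix (Fin n) (Fin n) ℝ) (τ : ℝ)
    (L Uhat : Matrix (Fin s) (Fin s) ℝ)
    (Q : Matrix (Fin n) (Fin n) ℝ) (hQ : IsUnit Q)
    (μ : Fin n → ℝ)
    (hdiag : τ • (M⁻¹ * K) = Q * Matrix.diagonal μ * Q⁻¹)
    (W₁ W₂ : Matrix (Fin s × Fin n) (Fin s × Fin n) ℝ)
    (hW₁ : W₁ = 1 + τ • (L⁻¹ ⊗ₖ (M⁻¹ * K)))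
    (hW₂ : W₂ = Uhat ⊗ₖ (1 : Matrix (Fin n) (Fin n) ℝ)) :
    ∀ lam : ℝ,
      (W₂ - lam • W₁).det
        = ∏ k : Fin n,
            (Uhat - lam • ((1 : Matrix (Fin s) (Fin s) ℝ) + μ k • L⁻¹)).det := by
  intro lam
  have hpencil : W₂ - lam • W₁
      = (Uhat - lam • 1) ⊗ₖ 1 + (-lam • L⁻¹) ⊗ₖ (τ • (M⁻¹ * K)) := by
    rw [hW₁, hW₂, smul_kronecker, kronecker_smul, ← one_kronecker_one (m := Fin s)]
    ext ⟨i, k⟩ ⟨j, l⟩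
    simp only [Matrix.sub_apply, Matrix.add_apply, Matrix.smul_apply, kroneckerMap_apply,
      smul_eq_mul]
    ring
  rw [hpencil, hdiag, det_kronecker_one_add_kronecker_conj_diagonal _ _ hQ]
  congr! 2 with k
  module

/-- If `τ M⁻¹K = Q D Q⁻¹` with `Q` invertible and
`D = diag(μ₁,…,μ_n)`, then for every `λ ∈ ℝ`,
`det(W₂ − λ W₁) = ∏_{k=1}^n det(Û − λ (I_s + μ_k L⁻¹))`. -/
theorem det_pencil_factors_over_modes
    (n s : ℕ) (hn : 0 < n) (hs : 0 < s)
    (M K : Matrix (Fin n) (Fin n) ℝ) (hM : IsUnit M) (τ : ℝ)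
    (L Uhat : Matrix (Fin s) (Fin s) ℝ)
    (hL : IsUnit L)
    (hUhat : ∀ i j : Fin s, j ≤ i → Uhat i j = 0)
    (Q : Matrix (Fin n) (Fin n) ℝ) (hQ : IsUnit Q)
    (μ : Fin n → ℝ)
    (hdiag : τ • (M⁻¹ * K) = Q * Matrix.diagonal μ * Q⁻¹)
    (W₁ W₂ : Matrix (Fin s × Fin n) (Fin s × Fin n) ℝ)
    (hW₁ : W₁ = 1 + τ • (L⁻¹ ⊗ₖ (M⁻¹ * K)))
    (hW₂ : W₂ = Uhat ⊗ₖ (1 : Matrix (Fin n) (Fin n) ℝ)) :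
    ∀ lam : ℝ,
      (W₂ - lam • W₁).det
        = ∏ k : Fin n,
            (Uhat - lam • ((1 : Matrix (Fin s) (Fin s) ℝ) + μ k • L⁻¹)).det :=
  det_pencil_factors_over_modes_general n s M K τ L Uhat Q hQ μ hdiag W₁ W₂ hW₁ hW₂
end

section
/- Write ℓ_{ij} for the entries of L⁻¹ and suppose I_n + ℓ_{ss} τ M⁻¹K is invertible. Let λ ∈ ℝ with λ ≠ 0 and let v ∈ ℝ^{sn}, partitioned into blocks v₁, …, v_s ∈ ℝⁿ, satisfy the generalized eigenvalue equation W₂ v = λ W₁ v. Then the last block is determined by the preceding blocks independently of λ: v_s = −(I_n + ℓ_{ss} τ M⁻¹K)⁻¹ ∑_{j=1}^{s−1} ℓ_{sj} τ (M⁻¹K) v_j. -/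
open Matrix Kronecker

/-! The last block row of `Û ⊗ I` vanishes because `Û` is strictly upper triangular, so, as
`λ ≠ 0`, the last block of `W₁ v` vanishes. That block is
`v_s + τ ∑_j ℓ_{sj} (M⁻¹K) v_j`; it remains to split off the term `j = s` and invert. -/

namespace Matrix

variable {R ι ι' κ κ' : Type*} [Fintype ι'] [Fintype κ']

theorem curry_kronecker_mulVec [CommSemiring R] (A : Matrix ι ι' R) (B : Matrix κ κ' R)
    (v : ι' × κ' → R) (i : ι) :
    Function.curry ((A ⊗ₖ B) *ᵥ v) i = ∑ j, A i j • (B *ᵥ Function.curry v j) := by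
  ext p
  simp only [Function.curry_apply, mulVec, dotProduct, kroneckerMap_apply, Fintype.sum_prod_type,
    Finset.sum_apply, Pi.smul_apply, smul_eq_mul, Finset.mul_sum, mul_assoc]

theorem eq_neg_inv_mulVec_of_mulVec_eq_neg [CommRing R] [Fintype κ] [DecidableEq κ]
    {A : Matrix κ κ R} (hA : IsUnit A) {x y : κ → R} (h : A *ᵥ x = -y) :
    x = -(A⁻¹ *ᵥ y) := by
  rw [← mulVec_neg, ← h, mulVec_mulVec, nonsing_inv_mul _ ((isUnit_iff_isUnit_det A).mp hA),
    one_mulVec]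

end Matrix

theorem Finset.sum_eq_add_sum_filter_lt_of_forall_le {α M : Type*} [LinearOrder α] [Fintype α]
    [AddCommMonoid M] {i : α} (hi : ∀ j, j ≤ i) (f : α → M) :
    ∑ j, f j = f i + ∑ j ∈ univ.filter (· < i), f j := by
  rw [← Finset.add_sum_erase _ _ (mem_univ i)]
  congr 2
  ext j
  simp [lt_iff_le_and_ne, hi j]

/-- Suppose `I_n + ℓ_{ss} τ M⁻¹K` is invertible, `λ ≠ 0`, and the
block vector `v` satisfies `W₂ v = λ W₁ v`. Then the last block of `v` is
determined by the preceding blocks independently of `λ`: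
`v_s = −(I_n + ℓ_{ss} τ M⁻¹K)⁻¹ ∑_{j<s} ℓ_{sj} τ (M⁻¹K) v_j`. -/
theorem last_block_backsubstitution
    (n s : ℕ) (hs : 0 < s)
    (M K : Matrix (Fin n) (Fin n) ℝ) (τ : ℝ)
    (L Uhat : Matrix (Fin s) (Fin s) ℝ)
    (hUhat : ∀ i j : Fin s, j ≤ i → Uhat i j = 0)
    (hss : IsUnit ((1 : Matrix (Fin n) (Fin n) ℝ)
        + (L⁻¹ ⟨s - 1, by omega⟩ ⟨s - 1, by omega⟩ * τ) • (M⁻¹ * K)))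
    (lam : ℝ) (hlam : lam ≠ 0)
    (v : Fin s × Fin n → ℝ)
    (hv : (Uhat ⊗ₖ (1 : Matrix (Fin n) (Fin n) ℝ)) *ᵥ v
        = lam • (((1 : Matrix (Fin s × Fin n) (Fin s × Fin n) ℝ)
            + τ • (L⁻¹ ⊗ₖ (M⁻¹ * K))) *ᵥ v)) :
    (fun p : Fin n => v (⟨s - 1, by omega⟩, p))
      = -(((1 : Matrix (Fin n) (Fin n) ℝ)
            + (L⁻¹ ⟨s - 1, by omega⟩ ⟨s - 1, by omega⟩ * τ) • (M⁻¹ * K))⁻¹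
          *ᵥ ∑ j ∈ Finset.univ.filter (fun j : Fin s => j < ⟨s - 1, by omega⟩),
              (L⁻¹ ⟨s - 1, by omega⟩ j * τ)
                • ((M⁻¹ * K) *ᵥ fun p : Fin n => v (j, p))) := by
  set i : Fin s := ⟨s - 1, by omega⟩
  have hi : ∀ j, j ≤ i := fun j => Fin.le_def.mpr (by simp only [i]; omega)
  have hW₂ : Function.curry ((Uhat ⊗ₖ (1 : Matrix (Fin n) (Fin n) ℝ)) *ᵥ v) i = 0 := by
    simp [curry_kronecker_mulVec, hUhat i _ (hi _)]
  have hW₁ : Function.curry v i + τ • ∑ j, L⁻¹ i j • ((M⁻¹ * K) *ᵥ Function.curry v j) = 0 := by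
    have h := congrArg (Function.curry · i) hv
    simp only [hW₂, add_mulVec, one_mulVec, smul_mulVec] at h
    rw [← curry_kronecker_mulVec]
    exact (smul_eq_zero.mp h.symm).resolve_left hlam
  rw [Finset.sum_eq_add_sum_filter_lt_of_forall_le hi] at hW₁
  refine eq_neg_inv_mulVec_of_mulVec_eq_neg hss ?_
  rw [add_mulVec, one_mulVec, smul_mulVec, eq_neg_iff_add_eq_zero, ← hW₁]
  simp only [mul_comm _ τ, mul_smul, Finset.smul_sum, smul_add, add_assoc]
  rfl
end
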